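/- arXiv:1706.09477 — 2 statements merged into one kernel-verified Lean document; each statement's English description precedes it below -/
import Mathlib

section
/- Let Ω = (a, b) ⊂ ℝ be an open interval with |Ω| = b − a > 0. Then lim_{t→0+} (1/t)·(|Ω| − H_Ω(t) − (2/π)·t·ln(1/t)) = (2/π)·(1 + ln(|Ω|)). -/
/-!
With `L = b - a`, the double integral is elementary: integrating the kernel in `y` gives
`(arctan ((b - x) / t) - arctan ((a - x) / t)) / π`, and integrating this in `x` with the
antiderivative `u * arctan u - log (1 + u ^ 2) / 2` of `arctan` gives
`H(t) = (2 L arctan (L / t) - t log (1 + (L / t) ^ 2)) / π`.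
Since `arctan (L / t) = π / 2 - arctan (t / L)`, the bracket equals
`(2 L / π) arctan (t / L) + (t / π) log (t ^ 2 + L ^ 2)`; after division by `t` the first term
tends to `2 / π` and the second to `(2 / π) log L`.
-/

open MeasureTheory Real Filter Topology

noncomputable section

namespace PoissonHC

/-- `κ_d = Γ((d+1)/2) / π^((d+1)/2)`. -/
def kappa (d : ℕ) : ℝ := Real.Gamma (((d : ℝ) + 1) / 2) / Real.pi ^ (((d : ℝ) + 1) / 2)

/-- `w_k`, the volume of the unit ball in `ℝ^k`. -/
def wVol (k : ℕ) : ℝ := Real.pi ^ ((k : ℝ) / 2) / Real.Gamma (1 + (k : ℝ) / 2)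

/-- `A_k = k ⬝ w_k`, the surface area of the unit ball in `ℝ^k`. -/
def aSurf (k : ℕ) : ℝ := k * wVol k

/-- The Poisson kernel `p_t(x) = κ_d t / (t² + |x|²)^((d+1)/2)`. -/
def poissonKernel (d : ℕ) (t : ℝ) (x : EuclideanSpace ℝ (Fin d)) : ℝ :=
  kappa d * t / (t ^ 2 + ‖x‖ ^ 2) ^ (((d : ℝ) + 1) / 2)

/-- The heat content `H_Ω(t) = ∫_Ω ∫_Ω p_t(x−y) dy dx`. -/
def heatContent (d : ℕ) (Ω : Set (EuclideanSpace ℝ (Fin d))) (t : ℝ) : ℝ :=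
  ∫ x in Ω, ∫ y in Ω, poissonKernel d t (x - y)

/-- The set covariance function `g_Ω(y) = |Ω ∩ (Ω + y)|`. -/
def cov (d : ℕ) (Ω : Set (EuclideanSpace ℝ (Fin d))) (y : EuclideanSpace ℝ (Fin d)) : ℝ :=
  (volume (Ω ∩ {x | x - y ∈ Ω})).toReal

/-- `ℓ_Ω = inf {ℓ > 0 : g_Ω(y) = 0 for all |y| ≥ ℓ}`. -/
def ellOmega (d : ℕ) (Ω : Set (EuclideanSpace ℝ (Fin d))) : ℝ :=
  sInf {ℓ : ℝ | 0 < ℓ ∧ ∀ y : EuclideanSpace ℝ (Fin d), ℓ ≤ ‖y‖ → cov d Ω y = 0}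

/-- The divergence of a vector field on `ℝ^d`. -/
def divergence (d : ℕ) (φ : EuclideanSpace ℝ (Fin d) → EuclideanSpace ℝ (Fin d))
    (x : EuclideanSpace ℝ (Fin d)) : ℝ :=
  ∑ i, fderiv ℝ φ x (EuclideanSpace.single i 1) i

/-- The set `{∫_Ω div φ : φ ∈ C¹_c(ℝ^d, ℝ^d), ‖φ‖_∞ ≤ 1}` whose supremum is the perimeter. -/
def perimVals (d : ℕ) (Ω : Set (EuclideanSpace ℝ (Fin d))) : Set ℝ :=
  {r | ∃ φ : EuclideanSpace ℝ (Fin d) → EuclideanSpace ℝ (Fin d),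
    ContDiff ℝ 1 φ ∧ HasCompactSupport φ ∧ (∀ x, ‖φ x‖ ≤ 1) ∧
    r = ∫ x in Ω, divergence d φ x}

/-- The perimeter `Per(Ω)`. -/
def perimeter (d : ℕ) (Ω : Set (EuclideanSpace ℝ (Fin d))) : ℝ := sSup (perimVals d Ω)

/-- The set `{∫_Ω ⟨∇φ, u⟩ : φ ∈ C¹_c(ℝ^d, ℝ), ‖φ‖_∞ ≤ 1}` whose supremum is the directional
variation `V_u(Ω)`. -/
def dirVarVals (d : ℕ) (Ω : Set (EuclideanSpace ℝ (Fin d)))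
    (u : EuclideanSpace ℝ (Fin d)) : Set ℝ :=
  {r | ∃ φ : EuclideanSpace ℝ (Fin d) → ℝ,
    ContDiff ℝ 1 φ ∧ HasCompactSupport φ ∧ (∀ x, |φ x| ≤ 1) ∧
    r = ∫ x in Ω, fderiv ℝ φ x u}

/-- The directional variation `V_u(Ω)`. -/
def dirVar (d : ℕ) (Ω : Set (EuclideanSpace ℝ (Fin d)))
    (u : EuclideanSpace ℝ (Fin d)) : ℝ := sSup (dirVarVals d Ω u)

/-- `γ_Ω(s) = ∫_{S^{d−1}} (V_u(Ω)/2 − (g_Ω(0) − g_Ω(su))/s) dH^{d−1}(u)`. -/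
def gammaFn (d : ℕ) (Ω : Set (EuclideanSpace ℝ (Fin d))) (s : ℝ) : ℝ :=
  ∫ u in Metric.sphere (0 : EuclideanSpace ℝ (Fin d)) 1,
    (dirVar d Ω u / 2 - (cov d Ω 0 - cov d Ω (s • u)) / s) ∂μH[(d : ℝ) - 1]

/-- The closed unit ball centered at the origin in `ℝ^d`. -/
def unitBall (d : ℕ) : Set (EuclideanSpace ℝ (Fin d)) := Metric.closedBall 0 1

/-- `Θ(z) = ∫₀^{arcsin z} sin^{d−2} θ cos² θ dθ`. -/
def thetaFn (d : ℕ) (z : ℝ) : ℝ :=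
  ∫ θ in (0:ℝ)..(Real.arcsin z), Real.sin θ ^ (d - 2) * Real.cos θ ^ 2

/-- The square `Q = [−1,1] × [−1,1] ⊂ ℝ²`. -/
def Qsq : Set (EuclideanSpace ℝ (Fin 2)) :=
  {x | x 0 ∈ Set.Icc (-1 : ℝ) 1 ∧ x 1 ∈ Set.Icc (-1 : ℝ) 1}

/-- `φ_Ω(t) = ∫_{|tw| ≥ ℓ_Ω} p_1(w) dw`. -/
def phiOmega (d : ℕ) (Ω : Set (EuclideanSpace ℝ (Fin d))) (t : ℝ) : ℝ :=
  ∫ w in {w : EuclideanSpace ℝ (Fin d) | ellOmega d Ω ≤ ‖t • w‖}, poissonKernel d 1 w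

/-- `Ψ(t) = ∫₀^{ℓ/t} r^d/(1 + r²)^((d+1)/2) dr`. -/
def PsiGen (d : ℕ) (ℓ t : ℝ) : ℝ :=
  ∫ r in (0:ℝ)..(ℓ / t), r ^ d / (1 + r ^ 2) ^ (((d : ℝ) + 1) / 2)

/-- `F(t) = ln(ℓ + √(ℓ² + t²)) + ∫₀^{arcsinh(ℓ/t)} (tanh^d θ − 1) dθ`. -/
def FGen (d : ℕ) (ℓ t : ℝ) : ℝ :=
  Real.log (ℓ + Real.sqrt (ℓ ^ 2 + t ^ 2)) +
    ∫ θ in (0:ℝ)..(Real.arsinh (ℓ / t)), (Real.tanh θ ^ d - 1)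

/-- The last coordinate vector `e_d = (0, …, 0, 1)` in `ℝ^d` (defined as `0` when `d = 0`). -/
def eLast (d : ℕ) : EuclideanSpace ℝ (Fin d) :=
  if h : 0 < d then EuclideanSpace.single (⟨d - 1, by omega⟩ : Fin d) 1 else 0

/-- `R_Ω(t) = ∫₀^{ℓ_Ω/t} r^d p_1(r e_d) γ_Ω(tr) dr`. -/
def RFn (d : ℕ) (Ω : Set (EuclideanSpace ℝ (Fin d))) (t : ℝ) : ℝ :=
  ∫ r in (0:ℝ)..(ellOmega d Ω / t), r ^ d * poissonKernel d 1 (r • eLast d) * gammaFn d Ω (t * r)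

end PoissonHC

open PoissonHC

open intervalIntegral

theorem hasDerivAt_mul_arctan_sub_log (u : ℝ) :
    HasDerivAt (fun u => u * arctan u - log (1 + u ^ 2) / 2) (arctan u) u := by
  have hlog : HasDerivAt (fun u : ℝ => log (1 + u ^ 2)) (2 * u / (1 + u ^ 2)) u := by
    simpa using ((hasDerivAt_pow 2 u).const_add 1).log (by positivity)
  refine (((hasDerivAt_id' u).mul (hasDerivAt_arctan u)).sub (hlog.div_const 2)).congr_deriv ?_
  field_simp
  ring

theorem integral_arctan (a b : ℝ) :
    ∫ x in a..b, arctan x =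
      (b * arctan b - log (1 + b ^ 2) / 2) - (a * arctan a - log (1 + a ^ 2) / 2) :=
  integral_eq_sub_of_hasDerivAt (fun u _ => hasDerivAt_mul_arctan_sub_log u)
    (continuous_arctan.intervalIntegrable a b)

theorem integral_poisson_kernel_one_dim (t x a b : ℝ) :
    ∫ y in a..b, t / (π * (t ^ 2 + (x - y) ^ 2)) =
      (arctan ((b - x) / t) - arctan ((a - x) / t)) / π := by
  have hsymm : ∀ y, t / (π * (t ^ 2 + (x - y) ^ 2)) = π⁻¹ * (t / (t ^ 2 + (y - x) ^ 2)) := by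
    intro y
    rw [← neg_sub y x, neg_sq, div_mul_eq_div_div_swap, div_eq_inv_mul _ π]
  simp_rw [hsymm, intervalIntegral.integral_const_mul,
    integral_comp_sub_right (fun y => t / (t ^ 2 + y ^ 2)), integral_div_sq_add_sq]
  ring

theorem integral_arctan_sub_arctan {t : ℝ} (ht : t ≠ 0) (a b : ℝ) :
    ∫ x in a..b, (arctan ((b - x) / t) - arctan ((a - x) / t)) =
      2 * t * ((b - a) / t * arctan ((b - a) / t) - log (1 + ((b - a) / t) ^ 2) / 2) := by
  have hb : ∫ x in a..b, arctan ((b - x) / t) = t * ∫ u in 0..(b - a) / t, arctan u := by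
    simp_rw [sub_div b, integral_comp_sub_div (fun u => arctan u) ht, sub_self, smul_eq_mul]
  have ha : ∫ x in a..b, arctan ((a - x) / t) = -(t * ∫ u in 0..(b - a) / t, arctan u) := by
    simp_rw [← neg_sub _ a, neg_div, arctan_neg, intervalIntegral.integral_neg, sub_div _ a,
      integral_comp_div_sub (fun u => arctan u) ht, sub_self, smul_eq_mul]
  rw [intervalIntegral.integral_sub, hb, ha, integral_arctan]
  · simp only [arctan_zero, mul_zero, zero_pow two_ne_zero, add_zero, log_one, zero_div, sub_self,
      sub_zero]
    ring
  all_goals exact (continuous_arctan.comp (by fun_prop)).intervalIntegrable _ _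

theorem integral_Ioo_integral_Ioo_poisson_kernel {t : ℝ} (ht : t ≠ 0) {a b : ℝ} (hab : a ≤ b) :
    ∫ x in Set.Ioo a b, ∫ y in Set.Ioo a b, t / (π * (t ^ 2 + (x - y) ^ 2)) =
      (2 * (b - a) * arctan ((b - a) / t) - t * log (1 + ((b - a) / t) ^ 2)) / π := by
  simp_rw [← integral_Ioc_eq_integral_Ioo, ← integral_of_le hab, integral_poisson_kernel_one_dim,
    intervalIntegral.integral_div, integral_arctan_sub_arctan ht]
  field_simp

theorem sub_integral_Ioo_integral_Ioo_poisson_kernel {t : ℝ} (ht : 0 < t) {a b : ℝ} (hab : a < b) :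
    (b - a) - (∫ x in Set.Ioo a b, ∫ y in Set.Ioo a b, t / (π * (t ^ 2 + (x - y) ^ 2))) -
        2 / π * (t * log (1 / t)) =
      2 * (b - a) / π * arctan (t / (b - a)) + t / π * log (t ^ 2 + (b - a) ^ 2) := by
  have hL : 0 < b - a := sub_pos.mpr hab
  have harctan : arctan ((b - a) / t) = π / 2 - arctan (t / (b - a)) := by
    rw [← inv_div, arctan_inv_of_pos (div_pos ht hL)]
  have hlog : log (1 + ((b - a) / t) ^ 2) = log (t ^ 2 + (b - a) ^ 2) - 2 * log t := by
    rw [div_pow, one_add_div (by positivity), log_div (by positivity) (by positivity), log_pow]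
    push_cast
    ring
  rw [integral_Ioo_integral_Ioo_poisson_kernel ht.ne' hab.le, harctan, hlog, one_div, log_inv]
  field_simp
  ring

theorem tendsto_arctan_mul_div_self (c : ℝ) :
    Tendsto (fun t => arctan (c * t) / t) (𝓝[≠] 0) (𝓝 c) := by
  have hderiv : HasDerivAt (fun t => arctan (c * t)) c 0 := by
    simpa [Function.comp_def] using
      (hasDerivAt_arctan (c * 0)).comp 0 ((hasDerivAt_id' 0).const_mul c)
  refine hderiv.tendsto_slope.congr fun t => ?_
  simp [slope_def_field]

/-- the one-dimensional result for an open interval `Ω = (a, b)`. -/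
theorem interval_heatContent_limit (a b : ℝ) (hab : a < b) :
    Tendsto (fun t : ℝ =>
        (1 / t) * ((b - a) -
          (∫ x in Set.Ioo a b, ∫ y in Set.Ioo a b, t / (Real.pi * (t ^ 2 + (x - y) ^ 2))) -
          (2 / Real.pi) * (t * Real.log (1 / t))))
      (𝓝[>] 0) (𝓝 ((2 / Real.pi) * (1 + Real.log (b - a)))) := by
  have hL : 0 < b - a := sub_pos.mpr hab
  have harctan : Tendsto (fun t => arctan (t / (b - a)) / t) (𝓝[>] 0) (𝓝 (b - a)⁻¹) := by
    simpa only [div_eq_inv_mul] using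
      (tendsto_arctan_mul_div_self (b - a)⁻¹).mono_left (nhdsGT_le_nhdsNE 0)
  have hlog : Tendsto (fun t => log (t ^ 2 + (b - a) ^ 2)) (𝓝[>] 0)
      (𝓝 (log (0 ^ 2 + (b - a) ^ 2))) :=
    ((continuousAt_log (by positivity)).comp (by fun_prop)).tendsto.mono_left nhdsWithin_le_nhds
  have hlim := (harctan.const_mul (2 * (b - a) / π)).add (hlog.const_mul π⁻¹)
  convert hlim.congr' ?_ using 2
  · rw [zero_pow two_ne_zero, zero_add, log_pow]
    field_simp
    ring
  · filter_upwards [self_mem_nhdsWithin] with t (ht : 0 < t)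
    rw [sub_integral_Ioo_integral_Ioo_poisson_kernel ht hab]
    field_simp
end
end

section
/- Let d ≥ 2 be an integer, let B = B₁(0) be the closed unit ball in ℝ^d, let 0 ≤ s ≤ 1, and let B(2s) = B₁(2s e_d) be the unit ball centered at 2s e_d with e_d = (0, …, 0, 1). Then |B ∩ B(2s)| = 2 A_{d−1} Θ(√(1 − s²)) − 2s w_{d−1} (1 − s²)^{(d−1)/2}, where Θ(z) = ∫₀^{arcsin(z)} sin^{d−2}(θ) cos²(θ) dθ for 0 ≤ z ≤ 1. In particular, Θ(1) = w_d/(2 A_{d−1}). -/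
open MeasureTheory Real Filter Topology

noncomputable section

open PoissonHC

/-!
Slice the lens `B ∩ B(2s e_d)` along `e_d`: over `y ∈ ℝ^{d-1}` the slice is an interval of length
`(2√(1 - |y|²) - 2s)₊`. This is a radial function of `y`, so polar coordinates give
`A_{d-1} ∫₀^∞ r^{d-2} (2√(1 - r²) - 2s)₊ dr`; the integrand vanishes beyond `√(1 - s²)`, and the
substitution `r = sin θ` turns the remaining integral into `2 Θ(√(1 - s²))` minus an elementary
term. At `s = 0` the lens is the whole ball, so `w_d = 2 A_{d-1} Θ(1)`.
-/

open Set Metric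

namespace PoissonHC

lemma wVol_eq_sqrt_pi_pow_div_gamma (k : ℕ) : wVol k = √π ^ k / Gamma (k / 2 + 1) := by
  rw [wVol, sqrt_eq_rpow, ← rpow_natCast, ← rpow_mul pi_nonneg, add_comm]
  ring_nf

lemma wVol_pos (k : ℕ) : 0 < wVol k := by
  rw [wVol_eq_sqrt_pi_pow_div_gamma]
  exact div_pos (by positivity) (Gamma_pos_of_pos (by positivity))

lemma aSurf_pos {k : ℕ} (hk : 0 < k) : 0 < aSurf k :=
  mul_pos (Nat.cast_pos.mpr hk) (wVol_pos k)

lemma volume_ball_zero_one_eq_ofReal_wVol {k : ℕ} (hk : 0 < k) :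
    volume (ball (0 : EuclideanSpace ℝ (Fin k)) 1) = ENNReal.ofReal (wVol k) := by
  have : Nonempty (Fin k) := ⟨⟨0, hk⟩⟩
  simp [EuclideanSpace.volume_ball, wVol_eq_sqrt_pi_pow_div_gamma]

lemma volume_unitBall_toReal {k : ℕ} (hk : 0 < k) : (volume (unitBall k)).toReal = wVol k := by
  have : Nonempty (Fin k) := ⟨⟨0, hk⟩⟩
  rw [unitBall, Measure.addHaar_closedBall_eq_addHaar_ball, volume_ball_zero_one_eq_ofReal_wVol hk,
    ENNReal.toReal_ofReal (wVol_pos _).le]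

lemma integral_fun_norm_eq_aSurf_mul (m : ℕ) (f : ℝ → ℝ) :
    ∫ y : EuclideanSpace ℝ (Fin (m + 1)), f ‖y‖ = aSurf (m + 1) * ∫ r in Ioi 0, r ^ m * f r := by
  rw [integral_fun_norm_addHaar, finrank_euclideanSpace_fin, measureReal_def,
    volume_ball_zero_one_eq_ofReal_wVol m.succ_pos, ENNReal.toReal_ofReal (wVol_pos _).le, aSurf]
  simp [mul_assoc]

lemma eLast_add_one (n : ℕ) : eLast (n + 1) = EuclideanSpace.single (Fin.last n) 1 := by
  simp [eLast, Fin.last]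

lemma volume_setOf_sq_add_le_one_and_sub_sq_add_le_one {s : ℝ} (hs : 0 ≤ s) (q : ℝ) :
    volume {t : ℝ | t ^ 2 + q ≤ 1 ∧ (t - 2 * s) ^ 2 + q ≤ 1} =
      ENNReal.ofReal (2 * (√(1 - q) - s)) := by
  rcases le_or_gt q 1 with hq | hq
  · set c := √(1 - q)
    have hc0 : 0 ≤ c := sqrt_nonneg _
    have hc : c ^ 2 = 1 - q := sq_sqrt (by linarith)
    have hslice : {t : ℝ | t ^ 2 + q ≤ 1 ∧ (t - 2 * s) ^ 2 + q ≤ 1} = Icc (2 * s - c) c := by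
      ext t
      simp only [mem_ofPred_eq, mem_Icc]
      constructor
      · rintro ⟨h₁, h₂⟩
        constructor <;> nlinarith [sq_nonneg (t - 2 * s + c), sq_nonneg (t + c)]
      · rintro ⟨h₁, h₂⟩
        constructor <;> nlinarith
    rw [hslice, Real.volume_Icc]
    ring_nf
  · rw [sqrt_eq_zero'.mpr (by linarith), ENNReal.ofReal_of_nonpos (by linarith),
      measure_eq_zero_iff_ae_notMem]
    refine Filter.Eventually.of_forall fun t ht => ?_
    nlinarith [ht.1, sq_nonneg t]

def snocMeasurableEquiv (n : ℕ) :
    ℝ × EuclideanSpace ℝ (Fin n) ≃ᵐ EuclideanSpace ℝ (Fin (n + 1)) :=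
  ((MeasurableEquiv.refl ℝ).prodCongr (MeasurableEquiv.toLp 2 (Fin n → ℝ)).symm).trans
    ((MeasurableEquiv.piFinSuccAbove (fun _ => ℝ) (Fin.last n)).symm.trans
      (MeasurableEquiv.toLp 2 _))

lemma snocMeasurableEquiv_apply (n : ℕ) (t : ℝ) (y : EuclideanSpace ℝ (Fin n)) :
    snocMeasurableEquiv n (t, y) = WithLp.toLp 2 (Fin.snoc (α := fun _ => ℝ) y.ofLp t) := by
  simp [snocMeasurableEquiv, Fin.insertNthEquiv, Fin.insertNth_last', MeasurableEquiv.prodCongr]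

lemma measurePreserving_snocMeasurableEquiv (n : ℕ) :
    MeasurePreserving (snocMeasurableEquiv n) :=
  (MeasurePreserving.id volume |>.prod
      (EuclideanSpace.volume_preserving_symm_measurableEquiv_toLp (Fin n))).trans <|
    (volume_preserving_piFinSuccAbove (fun _ => ℝ) (Fin.last n)).symm.trans
      (EuclideanSpace.volume_preserving_symm_measurableEquiv_toLp (Fin (n + 1))).symm

lemma norm_snocMeasurableEquiv_sub_smul_single_last_sq (n : ℕ) (t c : ℝ)
    (y : EuclideanSpace ℝ (Fin n)) :
    ‖snocMeasurableEquiv n (t, y) - c • EuclideanSpace.single (Fin.last n) 1‖ ^ 2 =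
      (t - c) ^ 2 + ‖y‖ ^ 2 := by
  simp [snocMeasurableEquiv_apply, EuclideanSpace.norm_sq_eq, Fin.sum_univ_castSucc,
    Fin.castSucc_ne_last, add_comm]

lemma volume_closedBall_inter_closedBall_smul_single_last (n : ℕ) {s : ℝ} (hs : 0 ≤ s) :
    volume (closedBall (0 : EuclideanSpace ℝ (Fin (n + 1))) 1 ∩
        closedBall ((2 * s) • EuclideanSpace.single (Fin.last n) 1) 1) =
      ∫⁻ y : EuclideanSpace ℝ (Fin n), ENNReal.ofReal (2 * (√(1 - ‖y‖ ^ 2) - s)) := by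
  let L : Set (ℝ × EuclideanSpace ℝ (Fin n)) := {p |
    p.1 ^ 2 + ‖p.2‖ ^ 2 ≤ 1 ∧ (p.1 - 2 * s) ^ 2 + ‖p.2‖ ^ 2 ≤ 1}
  have hL : MeasurableSet L := by measurability
  have hpre : snocMeasurableEquiv n ⁻¹' (closedBall 0 1 ∩
      closedBall ((2 * s) • EuclideanSpace.single (Fin.last n) 1) 1) = L := by
    ext ⟨t, y⟩
    have h₀ := norm_snocMeasurableEquiv_sub_smul_single_last_sq n t 0 y
    rw [zero_smul, sub_zero, sub_zero] at h₀
    simp only [mem_preimage, mem_inter_iff, mem_closedBall, dist_eq_norm, sub_zero,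
      ← sq_le_one_iff₀ (norm_nonneg _), h₀, norm_snocMeasurableEquiv_sub_smul_single_last_sq, L,
      mem_ofPred_eq]
  rw [← (measurePreserving_snocMeasurableEquiv n).measure_preimage
      (measurableSet_closedBall.inter measurableSet_closedBall).nullMeasurableSet,
    hpre, Measure.volume_eq_prod, Measure.prod_apply_symm hL]
  exact lintegral_congr fun y => volume_setOf_sq_add_le_one_and_sub_sq_add_le_one hs (‖y‖ ^ 2)

lemma thetaFn_add_two_eq_integral (n : ℕ) {b : ℝ} (hb₀ : -1 ≤ b) (hb₁ : b ≤ 1) :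
    thetaFn (n + 2) b = ∫ r in 0..b, r ^ n * √(1 - r ^ 2) := by
  have hsubst := intervalIntegral.integral_comp_mul_deriv (a := 0) (b := arcsin b)
    (g := fun r => r ^ n * √(1 - r ^ 2)) (fun θ _ => hasDerivAt_sin θ)
    continuous_cos.continuousOn (by fun_prop)
  rw [sin_zero, sin_arcsin hb₀ hb₁] at hsubst
  rw [← hsubst, thetaFn, Nat.add_sub_cancel]
  refine intervalIntegral.integral_congr fun θ hθ => ?_
  have hcos : 0 ≤ cos θ := by
    refine cos_nonneg_of_mem_Icc ⟨?_, ?_⟩ <;>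
      rcases mem_uIcc.mp hθ with h | h <;>
        linarith [neg_pi_div_two_le_arcsin b, arcsin_le_pi_div_two b, pi_pos]
  simp only [Function.comp, ← cos_sq', sqrt_sq hcos]
  ring

lemma integral_Ioi_pow_mul_max_sqrt_sub (n : ℕ) {s : ℝ} (hs₀ : 0 ≤ s) (hs₁ : s ≤ 1) :
    ∫ r in Ioi 0, r ^ n * max (2 * (√(1 - r ^ 2) - s)) 0 =
      2 * thetaFn (n + 2) √(1 - s ^ 2) - 2 * s * √(1 - s ^ 2) ^ (n + 1) / (n + 1) := by
  set b := √(1 - s ^ 2)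
  have hb₀ : 0 ≤ b := sqrt_nonneg _
  have hb₁ : b ≤ 1 := sqrt_le_one.mpr (by nlinarith)
  have hb₂ : b ^ 2 = 1 - s ^ 2 := sq_sqrt (by nlinarith)
  have hle : ∀ r, 0 ≤ r → r ≤ b → s ≤ √(1 - r ^ 2) := fun r hr hrb =>
    le_sqrt_of_sq_le (by nlinarith)
  have hgt : ∀ r, b < r → √(1 - r ^ 2) ≤ s := fun r hbr =>
    sqrt_le_iff.mpr ⟨hs₀, by nlinarith⟩
  calc ∫ r in Ioi 0, r ^ n * max (2 * (√(1 - r ^ 2) - s)) 0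
      = ∫ r in Ioc 0 b, r ^ n * max (2 * (√(1 - r ^ 2) - s)) 0 := by
        refine setIntegral_eq_of_subset_of_forall_sdiff_eq_zero measurableSet_Ioi
          Ioc_subset_Ioi_self fun r hr => ?_
        have hbr : b < r := not_le.mp fun hrb => hr.2 ⟨hr.1, hrb⟩
        rw [max_eq_right (by linarith [hgt r hbr]), mul_zero]
    _ = ∫ r in 0..b, (2 * (r ^ n * √(1 - r ^ 2)) - 2 * s * r ^ n) := by
        rw [intervalIntegral.integral_of_le hb₀]
        refine setIntegral_congr_fun measurableSet_Ioc fun r hr => ?_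
        rw [max_eq_left (by linarith [hle r hr.1.le hr.2])]
        ring
    _ = _ := by
        rw [intervalIntegral.integral_sub, intervalIntegral.integral_const_mul,
          intervalIntegral.integral_const_mul, integral_pow,
          thetaFn_add_two_eq_integral n (by linarith) hb₁]
        · ring
        all_goals exact (Continuous.intervalIntegrable (by fun_prop) _ _).const_mul _

lemma volume_unitBall_inter_closedBall_toReal (n : ℕ) {s : ℝ} (hs₀ : 0 ≤ s) (hs₁ : s ≤ 1) :
    (volume (unitBall (n + 2) ∩ closedBall ((2 * s) • eLast (n + 2)) 1)).toReal =
      2 * aSurf (n + 1) * thetaFn (n + 2) √(1 - s ^ 2) -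
        2 * s * wVol (n + 1) * √(1 - s ^ 2) ^ (n + 1) := by
  -- `ofReal` clips negative slice widths; `max _ 0` makes that explicit for the Bochner integral.
  have hwidth := integral_eq_lintegral_of_nonneg_ae (μ := volume)
    (f := fun y : EuclideanSpace ℝ (Fin (n + 1)) => max (2 * (√(1 - ‖y‖ ^ 2) - s)) 0)
    (ae_of_all _ fun _ => le_max_right _ _) (Continuous.aestronglyMeasurable (by fun_prop))
  simp only [ENNReal.ofReal_max, ENNReal.ofReal_zero, zero_le, max_eq_left] at hwidth
  rw [unitBall, eLast_add_one, volume_closedBall_inter_closedBall_smul_single_last (n + 1) hs₀,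
    ← hwidth, integral_fun_norm_eq_aSurf_mul n (fun r => max (2 * (√(1 - r ^ 2) - s)) 0),
    integral_Ioi_pow_mul_max_sqrt_sub n hs₀ hs₁, aSurf]
  field_simp
  push_cast
  ring

end PoissonHC

/-- volume of the intersection of two unit balls at distance `2s`, together with
the value `Θ(1) = w_d / (2 A_{d−1})`. -/
theorem volume_inter_unitBalls (d : ℕ) (hd : 2 ≤ d) (s : ℝ) (hs0 : 0 ≤ s) (hs1 : s ≤ 1) :
    (volume (unitBall d ∩ Metric.closedBall ((2 * s) • eLast d) 1)).toReal =
      2 * aSurf (d - 1) * thetaFn d (Real.sqrt (1 - s ^ 2)) -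
        2 * s * wVol (d - 1) * (1 - s ^ 2) ^ (((d : ℝ) - 1) / 2) ∧
    thetaFn d 1 = wVol d / (2 * aSurf (d - 1)) := by
  obtain ⟨n, rfl⟩ : ∃ n, d = n + 2 := ⟨d - 2, by omega⟩
  refine ⟨?_, ?_⟩
  · have hpow : √(1 - s ^ 2) ^ (n + 1) = (1 - s ^ 2) ^ ((((n + 2 : ℕ) : ℝ) - 1) / 2) := by
      rw [sqrt_eq_rpow, ← rpow_mul_natCast (by nlinarith)]
      push_cast
      ring_nf
    rw [volume_unitBall_inter_closedBall_toReal n hs0 hs1, hpow]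
    rfl
  · have hball := volume_unitBall_inter_closedBall_toReal n le_rfl zero_le_one
    rw [mul_zero, zero_smul, ← unitBall, inter_self, volume_unitBall_toReal (by omega)] at hball
    simp only [zero_pow two_ne_zero, sub_zero, sqrt_one, zero_mul] at hball
    show thetaFn (n + 2) 1 = wVol (n + 2) / (2 * aSurf (n + 1))
    rw [hball, mul_div_cancel_left₀ _ (mul_pos two_pos (aSurf_pos n.succ_pos)).ne']
end
end
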